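/- Let E be a finite-dimensional real inner product space, and let S, X ⊆ E be nonempty compact subsets. Let Δ_S := {z ∈ E : ∃ p, q ∈ S, p ≠ q, ‖z − p‖ = ‖z − q‖ = d_S(z)} be the medial axis of S, where d_S(z) := inf_{p∈S} ‖z − p‖. Let ε : X → ℝ be a function satisfying: (i) for every x ∈ X and every z ∈ closure(Δ_S), ‖x − z‖ > 5·ε(x); (ii) for every x ∈ X, d_S(x) < ε(x)/3; (iii) for every p ∈ S there exists x ∈ X with ‖x − p‖ < ε(x)/4; (iv) for all distinct x, y ∈ X, |ε(x) − ε(y)| < ‖x − y‖/17. Set U(X, ε) := ⋃_{x ∈ X} B(x, ε(x)) (open balls in E). Then S ⊆ U(X, ε), every point of U(X, ε) has a unique nearest point π_S(u) in S, and the map H : U(X,ε) × [0,1] → E, H(u,t) := t·π_S(u) + (1−t)·u, takes values in U(X,ε), is continuous, and satisfies H(u,0) = u, H(u,1) = π_S(u) ∈ S, and H(p,t) = p for all p ∈ S; i.e., S is a deformation retract of U(X, ε). -/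

import Mathlib

/-- The medial axis of a set `S`: points having at least two distinct nearest points in `S`. -/
def medialAxis {E : Type*} [NormedAddCommGroup E] [InnerProductSpace ℝ E] (S : Set E) : Set E :=
  {x | ∃ p ∈ S, ∃ q ∈ S, p ≠ q ∧ ‖x - p‖ = Metric.infDist x S ∧ ‖x - q‖ = Metric.infDist x S}

/-!
Within `5 ε(x)` of a centre `x` there are no points of the medial axis, so nearest points in `S`
are unique there and, by compactness of `S`, depend continuously on the point. The heart of the
argument is a reach estimate: if nearest points are unique on `closedBall c R`, then the nearest
point `p` of `c` is still a nearest point of every point of the normal ray from `p` through `c`,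
up to distance `R` beyond `c`. This is proved by marching from `c` in short steps, each along the
current normal direction; uniform continuity of the nearest-point map on the ball makes each step
gain almost its full length in distance to `S`.

For `u ∈ B(x, ε(x))` the estimate with `R = 5 ε(x) - ‖u - x‖` bounds `⟪u - x, u - π u⟫` from below,
which keeps the segment from `u` to `π u` inside `B(x, ε(x))` except possibly for a piece near
`π u`; that piece lies in the ball of a centre `y` with `‖y - π u‖ < ε(y) / 4`.
-/

open Metric Filter Topology

section NearestPoint

variable {E : Type*} [NormedAddCommGroup E] {S : Set E}

lemma IsCompact.exists_norm_sub_eq_infDist (hS : IsCompact S) (hSne : S.Nonempty) (z : E) :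
    ∃ p ∈ S, ‖z - p‖ = infDist z S := by
  obtain ⟨p, hp, h⟩ := hS.exists_infDist_eq_dist hSne z
  exact ⟨p, hp, by rw [h, dist_eq_norm]⟩

lemma IsCompact.continuousOn_nearest (hS : IsCompact S) {U : Set E} {π : E → E}
    (hnear : ∀ u ∈ U, ∃! p, p ∈ S ∧ ‖u - p‖ = infDist u S)
    (hπ : ∀ u ∈ U, π u ∈ S ∧ ‖u - π u‖ = infDist u S) :
    ContinuousOn π U := by
  intro u hu
  refine hS.tendsto_nhds_of_unique_mapClusterPt
    (eventually_nhdsWithin_of_forall fun v hv => (hπ v hv).1) fun q hqS hq => ?_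
  have hgraph : MapClusterPt (u, q) (𝓝[U] u) fun v => (v, π v) := by
    rw [mapClusterPt_iff_frequently] at hq ⊢
    intro s hs
    obtain ⟨A, hA, B, hB, hAB⟩ := mem_nhds_prod_iff.mp hs
    exact ((hq B hB).and_eventually (mem_nhdsWithin_of_mem_nhds hA)).mono
      fun v hv => hAB ⟨hv.2, hv.1⟩
  have hclosed : IsClosed {z : E × E | ‖z.1 - z.2‖ = infDist z.1 S} :=
    isClosed_eq (by fun_prop) ((continuous_infDist_pt S).comp continuous_fst)
  have huq : ‖u - q‖ = infDist u S :=
    hclosed.mem_of_mapClusterPt hgraph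
      (eventually_nhdsWithin_of_forall fun v hv => (hπ v hv).2)
  exact (hnear u hu).unique ⟨hqS, huq⟩ (hπ u hu)

end NearestPoint

section Reach

variable {E : Type*} [NormedAddCommGroup E] [InnerProductSpace ℝ E] {S : Set E}

lemma le_norm_add_smul_sub {z q q' : E} {D h ε' : ℝ} (hq : ‖z - q‖ = D) (hD : 0 < D)
    (hq' : D ≤ ‖z - q'‖) (hqq' : ‖q - q'‖ ≤ ε') (hε' : ε' ≤ D) (hh : 0 ≤ h) :
    D + h - h * ε' / D ≤ ‖z + (h / D) • (z - q) - q'‖ := by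
  have hinner : D ^ 2 - ε' * D ≤ inner ℝ (z - q') (z - q) := by
    have hsplit : z - q' = (z - q) + (q - q') := by abel
    have hcs := (abs_le.mp ((abs_real_inner_le_norm (q - q') (z - q)).trans
      (mul_le_mul_of_nonneg_right hqq' (norm_nonneg _)))).1
    rw [hsplit, inner_add_left, real_inner_self_eq_norm_sq, hq]
    rw [hq] at hcs
    linarith
  have hexp : ‖z + (h / D) • (z - q) - q'‖ ^ 2
      = ‖z - q'‖ ^ 2 + 2 * (h / D) * inner ℝ (z - q') (z - q) + h ^ 2 := by
    rw [show z + (h / D) • (z - q) - q' = (z - q') + (h / D) • (z - q) by abel,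
      norm_add_sq_real, real_inner_smul_right, norm_smul, Real.norm_eq_abs,
      abs_of_nonneg (by positivity), hq]
    field_simp
  have hb : h * ε' / D ≤ h := by
    rw [div_le_iff₀ hD]; exact mul_le_mul_of_nonneg_left hε' hh
  have hε'0 : 0 ≤ ε' := (norm_nonneg _).trans hqq'
  have hbD : h * ε' / D * D = h * ε' := div_mul_cancel₀ _ hD.ne'
  have hsq : (D + h - h * ε' / D) ^ 2 ≤ ‖z + (h / D) • (z - q) - q'‖ ^ 2 := by
    have hmul : 2 * (h / D) * (D ^ 2 - ε' * D) = 2 * h * D - 2 * h * ε' := by field_simp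
    have := mul_le_mul_of_nonneg_left hinner (by positivity : 0 ≤ 2 * (h / D))
    nlinarith [pow_le_pow_left₀ hD.le hq' 2,
      mul_le_mul_of_nonneg_left hb (by positivity : 0 ≤ h * ε' / D)]
  exact le_of_pow_le_pow_left₀ two_ne_zero (norm_nonneg _) hsq

/-- The point `w` is reached from `c` by `k` steps `w ↦ w + (h / infDist w S) • (w - π w)`. -/
lemma exists_norm_sub_le_and_le_infDist_of_modulus {π : E → E}
    (hπ : ∀ z, π z ∈ S ∧ ‖z - π z‖ = infDist z S) {c : E} {R h ε' : ℝ}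
    (hd₀ : 0 < infDist c S) (hε' : ε' ≤ infDist c S) (hh : 0 ≤ h)
    (hmod : ∀ z ∈ closedBall c R, ∀ z' ∈ closedBall c R, dist z z' ≤ h → dist (π z) (π z') ≤ ε')
    (k : ℕ) (hk : k * h ≤ R) :
    ∃ w, ‖w - c‖ ≤ k * h ∧ infDist c S + k * h * (1 - ε' / infDist c S) ≤ infDist w S := by
  set d₀ := infDist c S
  induction k with
  | zero => exact ⟨c, by simp [d₀]⟩
  | succ k ih =>
    push_cast at hk ⊢
    obtain ⟨w, hwc, hwS⟩ := ih (by nlinarith)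
    set D := infDist w S
    have hε'D : ε' / d₀ ≤ 1 := (div_le_one hd₀).mpr hε'
    have hd₀D : d₀ ≤ D := by
      nlinarith [mul_nonneg (mul_nonneg k.cast_nonneg hh) (sub_nonneg.mpr hε'D)]
    have hD : 0 < D := hd₀.trans_le hd₀D
    set w' := w + (h / D) • (w - π w)
    have hww' : ‖w' - w‖ = h := by
      rw [add_sub_cancel_left, norm_smul, (hπ w).2, Real.norm_eq_abs, abs_of_nonneg (by positivity),
        div_mul_cancel₀ _ hD.ne']
    have hw'c : ‖w' - c‖ ≤ (k + 1) * h := by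
      linarith [norm_sub_le_norm_sub_add_norm_sub w' w c]
    have hmem : ∀ v, ‖v - c‖ ≤ (k + 1) * h → v ∈ closedBall c R := fun v hv => by
      rw [mem_closedBall, dist_eq_norm]; linarith
    have hqq' : ‖π w - π w'‖ ≤ ε' := by
      rw [← dist_eq_norm]
      exact hmod w (hmem w (by linarith)) w' (hmem w' hw'c) (by rw [dist_comm, dist_eq_norm, hww'])
    have hε'0 : 0 ≤ ε' := (norm_nonneg _).trans hqq'
    have hgain := le_norm_add_smul_sub (hπ w).2 hD
      (by rw [← dist_eq_norm]; exact infDist_le_dist_of_mem (hπ w').1) hqq' (hε'.trans hd₀D) hh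
    have hloss : h * ε' / D ≤ h * (ε' / d₀) := by
      rw [mul_div_assoc]
      exact mul_le_mul_of_nonneg_left (div_le_div_of_nonneg_left hε'0 hd₀ hd₀D) hh
    refine ⟨w', hw'c, ?_⟩
    rw [← (hπ w').2]
    nlinarith

lemma IsCompact.exists_norm_sub_le_and_le_infDist [FiniteDimensional ℝ E] (hS : IsCompact S)
    (hSne : S.Nonempty) {c : E} {R : ℝ} (hR : 0 ≤ R)
    (huniq : ∀ z ∈ closedBall c R, ∃! p, p ∈ S ∧ ‖z - p‖ = infDist z S)
    (hd₀ : 0 < infDist c S) {ε' : ℝ} (hε'0 : 0 < ε') (hε' : ε' ≤ infDist c S) :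
    ∃ w, ‖w - c‖ ≤ R ∧ infDist c S + R * (1 - ε' / infDist c S) ≤ infDist w S := by
  choose π hπS hπd using hS.exists_norm_sub_eq_infDist hSne
  have hcont := hS.continuousOn_nearest huniq fun z _ => ⟨hπS z, hπd z⟩
  obtain ⟨η, hη, hunif⟩ := Metric.uniformContinuousOn_iff.mp
    ((isCompact_closedBall c R).uniformContinuousOn_of_continuous hcont) ε' hε'0
  obtain ⟨N, hN⟩ := exists_nat_gt (R / η)
  have hNpos : 0 < (N : ℝ) := (div_nonneg hR hη.le).trans_lt hN
  have hNh : N * (R / N) = R := mul_div_cancel₀ _ hNpos.ne'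
  have hh : R / N < η := by
    rw [div_lt_iff₀ hNpos]; rwa [div_lt_iff₀ hη, mul_comm] at hN
  obtain ⟨w, hwc, hwS⟩ := exists_norm_sub_le_and_le_infDist_of_modulus
    (fun z => ⟨hπS z, hπd z⟩) hd₀ hε' (by positivity) (fun z hz z' hz' hzz' => (hunif z hz z' hz' (hzz'.trans_lt hh)).le) N hNh.le
  rw [hNh] at hwc hwS
  exact ⟨w, hwc, hwS⟩

/-- `c + (R / d₀) • (c - p)` is the point of `closedBall c R` farthest from `p`. -/
lemma norm_sub_ray_end_sq_le {c p w : E} {d₀ R μ : ℝ} (hcp : ‖c - p‖ = d₀) (hd₀ : 0 < d₀)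
    (hR : 0 ≤ R) (hμ : 0 ≤ μ) (hμR : μ ≤ d₀ + R) (hwc : ‖w - c‖ ≤ R)
    (hwp : d₀ + R - μ ≤ ‖w - p‖) :
    ‖w - (c + (R / d₀) • (c - p))‖ ^ 2 ≤ 2 * R * μ * (d₀ + R) / d₀ := by
  have hp : ‖w - p‖ ^ 2 = ‖w - c‖ ^ 2 + 2 * inner ℝ (w - c) (c - p) + d₀ ^ 2 := by
    rw [show w - p = (w - c) + (c - p) by abel, norm_add_sq_real, hcp]
  have hP : ‖w - (c + (R / d₀) • (c - p))‖ ^ 2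
      = ‖w - c‖ ^ 2 - 2 * (R / d₀) * inner ℝ (w - c) (c - p) + R ^ 2 := by
    rw [show w - (c + (R / d₀) • (c - p)) = (w - c) - (R / d₀) • (c - p) by abel,
      norm_sub_sq_real, real_inner_smul_right, norm_smul, Real.norm_eq_abs,
      abs_of_nonneg (by positivity), hcp]
    field_simp
  have hinner : d₀ * R - μ * (d₀ + R) ≤ inner ℝ (w - c) (c - p) := by
    nlinarith [pow_le_pow_left₀ (by linarith) hwp 2, pow_le_pow_left₀ (norm_nonneg _) hwc 2]
  rw [hP, le_div_iff₀ hd₀]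
  have := mul_le_mul_of_nonneg_left hinner (by positivity : 0 ≤ 2 * R)
  have hsq := pow_le_pow_left₀ (norm_nonneg _) hwc 2
  field_simp
  nlinarith

theorem IsCompact.add_le_infDist_add_smul [FiniteDimensional ℝ E] (hS : IsCompact S)
    (hSne : S.Nonempty) {c p : E} {R : ℝ} (hR : 0 ≤ R)
    (huniq : ∀ z ∈ closedBall c R, ∃! p, p ∈ S ∧ ‖z - p‖ = infDist z S)
    (hp : p ∈ S) (hcp : ‖c - p‖ = infDist c S) (hd₀ : 0 < infDist c S) :
    infDist c S + R ≤ infDist (c + (R / infDist c S) • (c - p)) S := by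
  set d₀ := infDist c S
  set P := c + (R / d₀) • (c - p)
  let g : ℝ → ℝ := fun ε' => d₀ + R - R * ε' / d₀ - √(2 * R * (R * ε' / d₀) * (d₀ + R) / d₀)
  have hg : Tendsto g (𝓝[>] 0) (𝓝 (d₀ + R)) := by
    have : ContinuousAt g 0 := by fun_prop
    simpa [g] using this.tendsto.mono_left nhdsWithin_le_nhds
  rw [le_infDist hSne]
  intro m hm
  refine le_of_tendsto hg (eventually_of_mem (Ioc_mem_nhdsGT hd₀) fun ε' hε' => ?_)
  obtain ⟨w, hwc, hwS⟩ := hS.exists_norm_sub_le_and_le_infDist hSne hR huniq hd₀ hε'.1 hε'.2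
  have hμ : R * ε' / d₀ ≤ R := by
    rw [div_le_iff₀ hd₀]; exact mul_le_mul_of_nonneg_left hε'.2 hR
  have hfar : ∀ q ∈ S, d₀ + R - R * ε' / d₀ ≤ ‖w - q‖ := fun q hq => by
    rw [← dist_eq_norm]
    linarith [infDist_le_dist_of_mem (x := w) hq, mul_div_assoc R ε' d₀]
  have hwP : ‖w - P‖ ≤ √(2 * R * (R * ε' / d₀) * (d₀ + R) / d₀) :=
    Real.le_sqrt_of_sq_le (norm_sub_ray_end_sq_le hcp hd₀ hR (by have := hε'.1; positivity)
      (by linarith) hwc (hfar p hp))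
  have := hfar m hm
  rw [dist_eq_norm]
  linarith [norm_sub_le_norm_sub_add_norm_sub w P m, norm_sub_rev w P]

end Reach

-- Certificate: `-lhs = (e - r) * Q + (d - 2 * e / 3) * T` with `Q`, `T` as in `hQ`, `hT`.
lemma nsw_polynomial_neg {e r d : ℝ} (hr0 : 0 ≤ r) (hre : r < e) (hd : 2 * e / 3 ≤ d) :
    529 * ((5 * e - r) * (r ^ 2 - e ^ 2))
      + 23 * (24 * d + r - 17 * e)
        * ((r + e / 3) ^ 2 - d ^ 2 - 2 * d * (5 * e - r) + 2 * (e / 3) * (5 * e - r))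
      + (24 * d + r - 17 * e) ^ 2 * (5 * e - r) < 0 := by
  have he : 0 < e := hr0.trans_lt hre
  have hQ : 0 < -507 * r ^ 2 + 1786 * r * e + 550 * r * d + 17417 / 9 * e ^ 2 + 594 * d * e
      + 505 * d ^ 2 := by
    have hd0 : 0 ≤ d := by linarith
    nlinarith [mul_nonneg hr0 (sub_nonneg.mpr hre.le), mul_nonneg hr0 hd0, mul_pos he he,
      sq_nonneg d, mul_nonneg he.le hd0]
  have hT : 0 ≤ 552 * d ^ 2 + 2112 * d * e - 2752 / 3 * e ^ 2 := by nlinarith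
  nlinarith [mul_pos (sub_pos.mpr hre) hQ, mul_nonneg (sub_nonneg.mpr hd) hT]

/-- With `lam = t * ‖u - p‖` this is `(5 * e - r) * (‖t • p + (1 - t) • u - x‖ ^ 2 - e ^ 2) < 0`
once the inner product has been bounded in `norm_segment_sub_lt`; `23` and `24` come from the
constants `1 / 4` and `1 / 17`. -/
lemma nsw_quadratic_neg {e r dx d w lam : ℝ} (hr0 : 0 ≤ r) (hre : r < e) (hdx : dx ≤ e / 3)
    (hdw : d ≤ w) (hw : w ≤ r + dx) (hlam0 : 0 ≤ lam) (hlam : 23 * lam ≤ 24 * d + r - 17 * e) :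
    (5 * e - r) * (r ^ 2 - e ^ 2) - lam * (d ^ 2 + 2 * d * (5 * e - r) - w ^ 2)
      + 2 * lam * dx * (5 * e - r) + lam ^ 2 * (5 * e - r) < 0 := by
  set R := 5 * e - r
  set L := 24 * d + r - 17 * e
  have hR : 0 < R := by linarith
  have hbase : R * (r ^ 2 - e ^ 2) < 0 := mul_neg_of_pos_of_neg hR (by nlinarith)
  set B := w ^ 2 - d ^ 2 - 2 * d * R + 2 * dx * R
  rcases le_or_gt (B + lam * R) 0 with hB | hB
  · nlinarith [mul_nonpos_of_nonneg_of_nonpos hlam0 hB]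
  have hBmax : B ≤ (r + e / 3) ^ 2 - d ^ 2 - 2 * d * R + 2 * (e / 3) * R := by
    nlinarith [mul_le_mul_of_nonneg_left hdx hR.le]
  have hpoly := nsw_polynomial_neg hr0 hre (show 2 * e / 3 ≤ d by linarith)
  have hΛ : lam ≤ L / 23 := by linarith
  have hmono : lam * (B + lam * R) ≤ L / 23 * (B + L / 23 * R) :=
    calc lam * (B + lam * R) ≤ lam * (B + L / 23 * R) := by gcongr
      _ ≤ L / 23 * (B + L / 23 * R) := by gcongr; nlinarith
  nlinarith [mul_le_mul_of_nonneg_left hBmax (show 0 ≤ L by linarith)]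

section Segment

variable {E : Type*} [NormedAddCommGroup E] [InnerProductSpace ℝ E]

lemma le_inner_of_le_norm_add_smul {u p q : E} {d R : ℝ} (hup : ‖u - p‖ = d) (hd : 0 < d)
    (hR : 0 ≤ R) (hfar : d + R ≤ ‖u + (R / d) • (u - p) - q‖) :
    d * (d ^ 2 + 2 * d * R - ‖u - q‖ ^ 2) ≤ 2 * R * inner ℝ (u - q) (u - p) := by
  have hexp : ‖u + (R / d) • (u - p) - q‖ ^ 2
      = ‖u - q‖ ^ 2 + 2 * (R / d) * inner ℝ (u - q) (u - p) + R ^ 2 := by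
    rw [show u + (R / d) • (u - p) - q = (u - q) + (R / d) • (u - p) by abel, norm_add_sq_real,
      real_inner_smul_right, norm_smul, Real.norm_eq_abs, abs_of_nonneg (by positivity), hup]
    field_simp
  have hsq := pow_le_pow_left₀ (by positivity) hfar 2
  have hmul : d * (2 * (R / d) * inner ℝ (u - q) (u - p)) = 2 * R * inner ℝ (u - q) (u - p) := by
    field_simp
  nlinarith

lemma norm_segment_sub_lt {u p q x : E} {e t : ℝ} (hux : ‖u - x‖ < e) (hup : 0 < ‖u - p‖)
    (hxq : ‖x - q‖ ≤ e / 3) (hpq : ‖u - p‖ ≤ ‖u - q‖)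
    (hfar : ‖u - p‖ + (5 * e - ‖u - x‖)
      ≤ ‖u + ((5 * e - ‖u - x‖) / ‖u - p‖) • (u - p) - q‖)
    (ht : 0 ≤ t) (hlam : 23 * (t * ‖u - p‖) ≤ 24 * ‖u - p‖ + ‖u - x‖ - 17 * e) :
    ‖t • p + (1 - t) • u - x‖ < e := by
  set r := ‖u - x‖
  set d := ‖u - p‖
  have hr0 : 0 ≤ r := norm_nonneg _
  have hR : 0 < 5 * e - r := by linarith
  have hJ := le_inner_of_le_norm_add_smul rfl hup hR.le hfar
  have hqx : -(‖x - q‖ * d) ≤ inner ℝ (q - x) (u - p) := by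
    have := neg_abs_le (inner ℝ (q - x) (u - p))
    rw [norm_sub_rev x q]
    linarith [abs_real_inner_le_norm (q - x) (u - p)]
  have hI : d * (d ^ 2 + 2 * d * (5 * e - r) - ‖u - q‖ ^ 2) - 2 * (5 * e - r) * (‖x - q‖ * d)
      ≤ 2 * (5 * e - r) * inner ℝ (u - x) (u - p) := by
    rw [show u - x = (u - q) + (q - x) by abel, inner_add_left]
    nlinarith [mul_le_mul_of_nonneg_left hqx (by linarith : 0 ≤ 2 * (5 * e - r))]
  have hnorm : ‖t • p + (1 - t) • u - x‖ ^ 2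
      = r ^ 2 - 2 * t * inner ℝ (u - x) (u - p) + (t * d) ^ 2 := by
    rw [show t • p + (1 - t) • u - x = (u - x) - t • (u - p) by module, norm_sub_sq_real,
      real_inner_smul_right, norm_smul, Real.norm_eq_abs, abs_of_nonneg ht]
    ring
  have hquad := nsw_quadratic_neg hr0 hux hxq hpq
    (by linarith [norm_sub_le_norm_sub_add_norm_sub u x q]) (mul_nonneg ht hup.le) hlam
  have hsq : (5 * e - r) * ‖t • p + (1 - t) • u - x‖ ^ 2 < (5 * e - r) * e ^ 2 := by
    rw [hnorm]
    nlinarith [mul_le_mul_of_nonneg_left hI ht]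
  exact lt_of_pow_lt_pow_left₀ 2 (by linarith) (lt_of_mul_lt_mul_left hsq hR.le)

end Segment

section DeformationRetract

variable {E : Type*} [NormedAddCommGroup E] {S X : Set E} {ε : E → ℝ}

lemma pos_of_infDist_lt (h2 : ∀ x ∈ X, infDist x S < ε x / 3) {x : E} (hx : x ∈ X) :
    0 < ε x := by
  linarith [h2 x hx, infDist_nonneg (x := x) (s := S)]

lemma subset_iUnion_ball (h2 : ∀ x ∈ X, infDist x S < ε x / 3)
    (h3 : ∀ p ∈ S, ∃ x ∈ X, ‖x - p‖ < ε x / 4) : S ⊆ ⋃ x ∈ X, ball x (ε x) := by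
  intro p hp
  obtain ⟨x, hx, hxp⟩ := h3 p hp
  rw [Set.mem_iUnion₂]
  refine ⟨x, hx, ?_⟩
  rw [mem_ball, dist_comm, dist_eq_norm]
  linarith [pos_of_infDist_lt h2 hx]

variable [InnerProductSpace ℝ E]

lemma IsCompact.existsUnique_nearest_of_notMem_medialAxis (hS : IsCompact S) (hSne : S.Nonempty)
    {z : E} (hz : z ∉ medialAxis S) : ∃! p, p ∈ S ∧ ‖z - p‖ = infDist z S := by
  obtain ⟨p, hp, hzp⟩ := hS.exists_norm_sub_eq_infDist hSne z
  refine ⟨p, ⟨hp, hzp⟩, fun q ⟨hq, hzq⟩ => ?_⟩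
  by_contra hne
  exact hz ⟨q, hq, p, hp, hne, hzq, hzp⟩

lemma IsCompact.existsUnique_nearest_of_norm_sub_le (hS : IsCompact S) (hSne : S.Nonempty)
    (h1 : ∀ x ∈ X, ∀ z ∈ closure (medialAxis S), 5 * ε x < ‖x - z‖) {x z : E} (hx : x ∈ X)
    (hz : ‖x - z‖ ≤ 5 * ε x) : ∃! p, p ∈ S ∧ ‖z - p‖ = infDist z S :=
  hS.existsUnique_nearest_of_notMem_medialAxis hSne fun hm =>
    (h1 x hx z (subset_closure hm)).not_ge hz

lemma IsCompact.existsUnique_nearest_of_mem_iUnion_ball (hS : IsCompact S) (hSne : S.Nonempty)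
    (h1 : ∀ x ∈ X, ∀ z ∈ closure (medialAxis S), 5 * ε x < ‖x - z‖)
    (h2 : ∀ x ∈ X, infDist x S < ε x / 3) {u : E} (hu : u ∈ ⋃ x ∈ X, ball x (ε x)) :
    ∃! p, p ∈ S ∧ ‖u - p‖ = infDist u S := by
  obtain ⟨x, hx, hux⟩ := Set.mem_iUnion₂.mp hu
  rw [mem_ball, dist_comm, dist_eq_norm] at hux
  exact hS.existsUnique_nearest_of_norm_sub_le hSne h1 hx (by linarith [pos_of_infDist_lt h2 hx])

variable [FiniteDimensional ℝ E]

lemma IsCompact.norm_segment_sub_lt_of_far (hS : IsCompact S) (hSne : S.Nonempty)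
    (h1 : ∀ x ∈ X, ∀ z ∈ closure (medialAxis S), 5 * ε x < ‖x - z‖)
    (h2 : ∀ x ∈ X, infDist x S < ε x / 3) {x u p : E} {t : ℝ} (hx : x ∈ X)
    (hux : ‖u - x‖ < ε x) (hp : p ∈ S) (hup : ‖u - p‖ = infDist u S) (hd : 0 < ‖u - p‖)
    (ht : 0 ≤ t) (hlam : 23 * (t * ‖u - p‖) ≤ 24 * ‖u - p‖ + ‖u - x‖ - 17 * ε x) :
    ‖t • p + (1 - t) • u - x‖ < ε x := by
  obtain ⟨q, hq, hxq⟩ := hS.exists_norm_sub_eq_infDist hSne x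
  have huniq : ∀ z ∈ closedBall u (5 * ε x - ‖u - x‖), ∃! p, p ∈ S ∧ ‖z - p‖ = infDist z S := by
    intro z hz
    rw [mem_closedBall, dist_eq_norm] at hz
    refine hS.existsUnique_nearest_of_norm_sub_le hSne h1 hx ?_
    linarith [norm_sub_le_norm_sub_add_norm_sub x u z, norm_sub_rev x u, norm_sub_rev z u]
  have hray := hS.add_le_infDist_add_smul hSne (by linarith [pos_of_infDist_lt h2 hx]) huniq hp
    hup (hup ▸ hd)
  rw [← hup] at hray
  refine norm_segment_sub_lt (q := q) hux hd (by linarith [h2 x hx]) ?_ ?_ ht hlam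
  · rw [hup, ← dist_eq_norm]; exact infDist_le_dist_of_mem hq
  · exact hray.trans ((infDist_le_dist_of_mem hq).trans_eq (dist_eq_norm _ _))

/-- Points of the segment within `3 / 4 * ε y` of `p` lie in the ball about `y`; for the others
the Lipschitz bound on `ε` yields the hypothesis `hlam` of `norm_segment_sub_lt_of_far`. -/
lemma IsCompact.segment_mem_iUnion_ball (hS : IsCompact S) (hSne : S.Nonempty)
    (h1 : ∀ x ∈ X, ∀ z ∈ closure (medialAxis S), 5 * ε x < ‖x - z‖)
    (h2 : ∀ x ∈ X, infDist x S < ε x / 3) (h3 : ∀ p ∈ S, ∃ x ∈ X, ‖x - p‖ < ε x / 4)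
    (h4 : ∀ x ∈ X, ∀ y ∈ X, x ≠ y → |ε x - ε y| < ‖x - y‖ / 17) {u p : E}
    (hu : u ∈ ⋃ x ∈ X, ball x (ε x)) (hp : p ∈ S) (hup : ‖u - p‖ = infDist u S) {t : ℝ}
    (ht : t ∈ Set.Icc (0 : ℝ) 1) : t • p + (1 - t) • u ∈ ⋃ x ∈ X, ball x (ε x) := by
  obtain ⟨x, hx, hux⟩ := Set.mem_iUnion₂.mp hu
  rw [mem_ball, dist_eq_norm] at hux
  obtain ⟨y, hy, hyp⟩ := h3 p hp
  have hεy := pos_of_infDist_lt h2 hy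
  rw [Set.mem_iUnion₂]
  have hwp : ‖t • p + (1 - t) • u - p‖ = (1 - t) * ‖u - p‖ := by
    rw [show t • p + (1 - t) • u - p = (1 - t) • (u - p) by module, norm_smul,
      Real.norm_eq_abs, abs_of_nonneg (by linarith [ht.2])]
  by_cases hnear : (1 - t) * ‖u - p‖ < 3 / 4 * ε y
  · refine ⟨y, hy, ?_⟩
    rw [mem_ball, dist_eq_norm]
    linarith [norm_sub_le_norm_sub_add_norm_sub (t • p + (1 - t) • u) p y, norm_sub_rev p y]
  refine ⟨x, hx, ?_⟩
  rw [mem_ball, dist_eq_norm]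
  push Not at hnear
  have hd : 0 < ‖u - p‖ := by
    by_contra! h
    nlinarith [norm_nonneg (u - p), ht.2]
  have hεxy : ε x - ε y ≤ ‖x - y‖ / 17 := by
    rcases eq_or_ne x y with rfl | hxy
    · simp
    · exact (le_abs_self _).trans (h4 x hx y hy hxy).le
  have hxy : ‖x - y‖ ≤ ‖u - x‖ + ‖u - p‖ + ε y / 4 := by
    linarith [norm_sub_le_norm_sub_add_norm_sub x u y, norm_sub_le_norm_sub_add_norm_sub u p y,
      norm_sub_rev x u, norm_sub_rev p y]
  refine hS.norm_segment_sub_lt_of_far hSne h1 h2 hx hux hp hup hd ht.1 ?_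
  nlinarith

end DeformationRetract

theorem stmt_9_general {E : Type*} [NormedAddCommGroup E] [InnerProductSpace ℝ E]
    [FiniteDimensional ℝ E] (S X : Set E)
    (hS : IsCompact S) (hSne : S.Nonempty)
    (ε : E → ℝ)
    (h1 : ∀ x ∈ X, ∀ z ∈ closure (medialAxis S), 5 * ε x < ‖x - z‖)
    (h2 : ∀ x ∈ X, Metric.infDist x S < ε x / 3)
    (h3 : ∀ p ∈ S, ∃ x ∈ X, ‖x - p‖ < ε x / 4)
    (h4 : ∀ x ∈ X, ∀ y ∈ X, x ≠ y → |ε x - ε y| < ‖x - y‖ / 17)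
    (U : Set E) (hU : U = ⋃ x ∈ X, Metric.ball x (ε x)) :
    S ⊆ U ∧
    (∀ u ∈ U, ∃! p, p ∈ S ∧ ‖u - p‖ = Metric.infDist u S) ∧
    ∀ π : E → E, (∀ u ∈ U, π u ∈ S ∧ ‖u - π u‖ = Metric.infDist u S) →
      (∀ u ∈ U, ∀ t ∈ Set.Icc (0:ℝ) 1, t • π u + (1 - t) • u ∈ U) ∧
      ContinuousOn (fun p : E × ℝ => p.2 • π p.1 + (1 - p.2) • p.1)
        (U ×ˢ Set.Icc (0:ℝ) 1) ∧
      (∀ u ∈ U, (0:ℝ) • π u + (1 - (0:ℝ)) • u = u ∧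
        (1:ℝ) • π u + (1 - (1:ℝ)) • u = π u ∧ π u ∈ S) ∧
      (∀ p ∈ S, ∀ t ∈ Set.Icc (0:ℝ) 1, t • π p + (1 - t) • p = p) := by
  subst hU
  have hSU := subset_iUnion_ball h2 h3
  have hnear : ∀ u ∈ ⋃ x ∈ X, ball x (ε x), ∃! p, p ∈ S ∧ ‖u - p‖ = infDist u S :=
    fun u hu => hS.existsUnique_nearest_of_mem_iUnion_ball hSne h1 h2 hu
  refine ⟨hSU, hnear, fun π hπ => ⟨fun u hu t ht =>
    hS.segment_mem_iUnion_ball hSne h1 h2 h3 h4 hu (hπ u hu).1 (hπ u hu).2 ht, ?_,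
    fun u hu => ⟨by simp, by simp, (hπ u hu).1⟩, fun p hp t _ => ?_⟩⟩
  · have hπc := hS.continuousOn_nearest hnear hπ
    exact (continuous_snd.continuousOn.smul
      (hπc.comp continuous_fst.continuousOn fun z hz => hz.1)).add
      ((continuousOn_const.sub continuous_snd.continuousOn).smul continuous_fst.continuousOn)
  · have hfix := (hπ p (hSU hp)).2
    rw [infDist_zero_of_mem hp, norm_eq_zero, sub_eq_zero] at hfix
    rw [← hfix]
    module

theorem stmt_9 {E : Type*} [NormedAddCommGroup E] [InnerProductSpace ℝ E]
    [FiniteDimensional ℝ E] (S X : Set E)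
    (hS : IsCompact S) (hSne : S.Nonempty) (hX : IsCompact X) (hXne : X.Nonempty)
    (ε : E → ℝ)
    (h1 : ∀ x ∈ X, ∀ z ∈ closure (medialAxis S), 5 * ε x < ‖x - z‖)
    (h2 : ∀ x ∈ X, Metric.infDist x S < ε x / 3)
    (h3 : ∀ p ∈ S, ∃ x ∈ X, ‖x - p‖ < ε x / 4)
    (h4 : ∀ x ∈ X, ∀ y ∈ X, x ≠ y → |ε x - ε y| < ‖x - y‖ / 17)
    (U : Set E) (hU : U = ⋃ x ∈ X, Metric.ball x (ε x)) :
    S ⊆ U ∧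
    (∀ u ∈ U, ∃! p, p ∈ S ∧ ‖u - p‖ = Metric.infDist u S) ∧
    ∀ π : E → E, (∀ u ∈ U, π u ∈ S ∧ ‖u - π u‖ = Metric.infDist u S) →
      (∀ u ∈ U, ∀ t ∈ Set.Icc (0:ℝ) 1, t • π u + (1 - t) • u ∈ U) ∧
      ContinuousOn (fun p : E × ℝ => p.2 • π p.1 + (1 - p.2) • p.1)
        (U ×ˢ Set.Icc (0:ℝ) 1) ∧
      (∀ u ∈ U, (0:ℝ) • π u + (1 - (0:ℝ)) • u = u ∧
        (1:ℝ) • π u + (1 - (1:ℝ)) • u = π u ∧ π u ∈ S) ∧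
      (∀ p ∈ S, ∀ t ∈ Set.Icc (0:ℝ) 1, t • π p + (1 - t) • p = p) :=
  stmt_9_general S X hS hSne ε h1 h2 h3 h4 U hU
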